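/- For every real number x ≥ 1 and every plan with x tankloads in the single-jeep model, if the plan reaches a state with jeep position d and subsequently reaches a state with jeep position 0, then d ≤ G(x); that is, a single jeep with x tankloads cannot make a round trip to any distance exceeding G(x). -/

import Mathlib

/-- A state of the single-jeep model: the jeep's position, the fuel in its
tank, and a finitely supported function recording the fuel in depots. -/
structure JeepState where
  pos : ℝ
  tank : ℝ
  depot : ℝ →₀ ℝ

/-- Admissible moves of the single-jeep model: either drive (consuming one
tankload per unit of distance), or transfer fuel between the tank and the
depot at the jeep's current position. -/
inductive JeepStep : JeepState → JeepState → Prop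
  | drive (s : JeepState) (p' : ℝ)
      (h : 0 ≤ s.tank - |p' - s.pos|) :
      JeepStep s ⟨p', s.tank - |p' - s.pos|, s.depot⟩
  | transfer (s : JeepState) (t' : ℝ) (D' : ℝ →₀ ℝ)
      (hcons : t' + D' s.pos = s.tank + s.depot s.pos)
      (ht0 : 0 ≤ t') (ht1 : t' ≤ 1)
      (hD : ∀ q, 0 ≤ D' q)
      (heq : ∀ q, q ≠ s.pos → D' q = s.depot q) :
      JeepStep s ⟨s.pos, t', D'⟩

/-- The initial state of a plan with `x` tankloads: the jeep is at `0` with an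
empty tank, and `x` tankloads of fuel are stored at position `0`. -/
noncomputable def jeepInit (x : ℝ) : JeepState :=
  ⟨0, 0, Finsupp.single 0 x⟩

/-- `G x = Σ_{k=1}^{⌈x⌉−1} 1/(2k) + (x − ⌈x⌉ + 1)/(2⌈x⌉)`. -/
noncomputable def G (x : ℝ) : ℝ :=
  (∑ k ∈ Finset.Icc 1 (⌈x⌉₊ - 1), 1 / (2 * (k : ℝ))) +
    (x - ⌈x⌉₊ + 1) / (2 * (⌈x⌉₊ : ℝ))

/-!
Fix `y ≥ 0`. Fuel gets to the right of `y` only inside the tank, so if the jeep crosses `y`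
outwards `R y` times, the fuel `F y` it burns to the right of `y` is at most `R y`. Since the
jeep returns to `0`, it also crosses `y` inwards `R y` times, so `F` decreases at rate at least
`2 R ≥ 2 ⌈F⌉`, and `R ≥ 1` up to `d`. Hence on the stretch of road where `⌈F⌉ = k` the jeep
burns at least `2 k` per unit of length, and since `F 0 ≤ x`, summing these stretches over
`k = 1, …, ⌈x⌉` (by parts) gives `d ≤ G x`.
-/

theorem Finsupp.sum_add_eq_of_forall_ne {ι M N : Type*} [AddZeroClass M] [AddCommMonoid N]
    {D D' : ι →₀ M} {p : ι} (h : ∀ q, q ≠ p → D' q = D q) (g : ι → M → N)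
    (hg₀ : ∀ q, g q 0 = 0) (hg : ∀ q a b, g q (a + b) = g q a + g q b) :
    D'.sum g + g p (D p) = D.sum g + g p (D' p) := by
  classical
  have hD' : D.update p (D' p) = D' := by
    ext q
    rw [update_apply]
    split_ifs with hq
    exacts [hq ▸ rfl, (h q hq).symm]
  simpa only [hD'] using sum_update_add D p (D' p) g hg₀ hg

open Finset in
/-- Summation by parts: `b k` enters with the weight `1 / (2 k) - 1 / (2 (k + 1)) > 0`. -/
theorem sum_range_sub_div_le (b : ℕ → ℝ) (hb₀ : 0 ≤ b 0) (m : ℕ)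
    (hb : ∀ k ∈ Icc 1 m, b k ≤ k) :
    ∑ i ∈ range (m + 1), (b (i + 1) - b i) / (2 * (i + 1)) ≤
      ∑ k ∈ Icc 1 m, 1 / (2 * (k : ℝ)) + (b (m + 1) - m) / (2 * (m + 1)) := by
  induction m with
  | zero => simpa using div_le_div_of_nonneg_right (sub_le_self (b 1) hb₀) zero_le_two
  | succ m ih =>
    have hm : b (m + 1) ≤ m + 1 := by exact_mod_cast hb (m + 1) (by simp)
    have hstep : (b (m + 1 + 1) - b (m + 1)) / (2 * (m + 1 + 1)) + (b (m + 1) - m) / (2 * (m + 1))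
        = 1 / (2 * (m + 1)) + (b (m + 1 + 1) - (m + 1)) / (2 * (m + 1 + 1)) -
          (m + 1 - b (m + 1)) * (1 / (2 * (m + 1)) - 1 / (2 * (m + 1 + 1))) := by
      field_simp
      ring
    have hgap : 0 ≤ (m + 1 - b (m + 1)) * (1 / (2 * (m + 1)) - 1 / (2 * (m + 1 + 1)) : ℝ) :=
      mul_nonneg (by linarith) (sub_nonneg.2 (by gcongr; linarith))
    rw [sum_range_succ, sum_Icc_succ_top (by omega)]
    push_cast
    linarith [ih fun k hk => hb k (Finset.Icc_subset_Icc_right (Nat.le_succ m) hk)]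

open Set MeasureTheory
open scoped ENNReal

namespace MeasureTheory

variable {α ι : Type*} [MeasurableSpace α] (μ : Measure α) {I : ι → Set α}
  [∀ i, DecidablePred (· ∈ I i)]

lemma setLIntegral_countP (hI : ∀ i, MeasurableSet (I i)) (U : Set α) (l : List ι) :
    ∫⁻ z in U, (l.countP fun i => z ∈ I i : ℝ≥0∞) ∂μ = (l.map fun i => μ (I i ∩ U)).sum := by
  induction l with
  | nil => simp
  | cons i l ih =>
    have hcons : ∀ z, ((i :: l).countP fun j => z ∈ I j : ℝ≥0∞) =
        (l.countP fun j => z ∈ I j : ℝ≥0∞) + (I i).indicator 1 z := by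
      intro z
      by_cases hz : z ∈ I i <;> simp [hz]
    simp_rw [hcons]
    rw [lintegral_add_right _ (measurable_one.indicator (hI i)), ih,
      lintegral_indicator_one (hI i), Measure.restrict_apply (hI i), List.map_cons,
      List.sum_cons, add_comm]

lemma natCast_mul_le_sum_measure_inter (hI : ∀ i, MeasurableSet (I i)) (l : List ι)
    {U : Set α} (hU : MeasurableSet U) {m : ℕ} (h : ∀ z ∈ U, m ≤ l.countP fun i => z ∈ I i) :
    m * μ U ≤ (l.map fun i => μ (I i ∩ U)).sum :=
  calc m * μ U = ∫⁻ _ in U, (m : ℝ≥0∞) ∂μ := (setLIntegral_const U _).symm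
    _ ≤ ∫⁻ z in U, (l.countP fun i => z ∈ I i : ℝ≥0∞) ∂μ :=
        setLIntegral_mono' hU fun z hz => by exact_mod_cast h z hz
    _ = (l.map fun i => μ (I i ∩ U)).sum := setLIntegral_countP μ hI U l

end MeasureTheory

namespace Jeep

/-- `F y` models the fuel burnt to the right of `y` and `R y` the number of outward crossings
of `y`; in `decay`, each outward crossing of `(α, β)` is matched by an inward one. -/
structure IsFuelProfile (F : ℝ → ℝ) (R : ℝ → ℕ) (d : ℝ) : Prop where
  continuous : Continuous F
  nonneg : ∀ y, 0 ≤ F y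
  le_crossings : ∀ z, 0 ≤ z → F z ≤ R z
  one_le_crossings : ∀ z, 0 ≤ z → z < d → 1 ≤ R z
  decay : ∀ α β (k : ℕ), 0 ≤ α → α ≤ β → (∀ z ∈ Ioo α β, k ≤ R z) →
    2 * k * (β - α) ≤ F α - F β

section Sublevel

variable {F : ℝ → ℝ} {d z : ℝ} {k : ℕ}

noncomputable def sublevelInf (F : ℝ → ℝ) (d : ℝ) (k : ℕ) : ℝ :=
  sInf ({y ∈ Icc 0 d | F y ≤ k} ∪ {d})

lemma bddBelow_sublevel : BddBelow ({y ∈ Icc 0 d | F y ≤ k} ∪ {d}) :=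
  ⟨min 0 d, by rintro y (⟨⟨hy, -⟩, -⟩ | rfl); exacts [min_le_of_left_le hy, min_le_right _ _]⟩

lemma sublevelInf_mem (hF : Continuous F) (k : ℕ) :
    sublevelInf F d k ∈ {y ∈ Icc 0 d | F y ≤ k} ∪ {d} :=
  ((isClosed_Icc.inter (isClosed_le hF continuous_const)).union isClosed_singleton).csInf_mem
    ⟨d, Or.inr rfl⟩ bddBelow_sublevel

lemma sublevelInf_le (k : ℕ) : sublevelInf F d k ≤ d :=
  csInf_le bddBelow_sublevel (Or.inr rfl)

lemma sublevelInf_nonneg (hF : Continuous F) (hd : 0 ≤ d) (k : ℕ) : 0 ≤ sublevelInf F d k := by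
  rcases sublevelInf_mem hF k with ⟨⟨h, -⟩, -⟩ | h
  exacts [h, hd.trans_eq h.symm]

lemma apply_sublevelInf_le (hF : Continuous F) (h : sublevelInf F d k < d) :
    F (sublevelInf F d k) ≤ k := by
  rcases sublevelInf_mem hF k with ⟨-, h'⟩ | h'
  exacts [h', absurd h' h.ne]

lemma lt_apply_of_lt_sublevelInf (hz : 0 ≤ z) (h : z < sublevelInf F d k) : (k : ℝ) < F z :=
  not_le.1 fun hFz => h.not_ge <| csInf_le bddBelow_sublevel
    (Or.inl ⟨⟨hz, h.le.trans (sublevelInf_le k)⟩, hFz⟩)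

lemma sublevelInf_antitone : Antitone (sublevelInf F d) := fun _ _ hkk' =>
  csInf_le_csInf bddBelow_sublevel ⟨d, Or.inr rfl⟩ <|
    union_subset_union_left _ fun _ ⟨hy, hFy⟩ => ⟨hy, hFy.trans (by exact_mod_cast hkk')⟩

lemma sublevelInf_eq_zero (hF : Continuous F) (hd : 0 ≤ d) (h : F 0 ≤ k) :
    sublevelInf F d k = 0 :=
  (csInf_le bddBelow_sublevel (Or.inl ⟨⟨le_rfl, hd⟩, h⟩)).antisymm (sublevelInf_nonneg hF hd k)

end Sublevel

namespace IsFuelProfile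

variable {F : ℝ → ℝ} {R : ℝ → ℕ} {d : ℝ}

lemma pos (hP : IsFuelProfile F R d) {z : ℝ} (hz : 0 ≤ z) (hzd : z < d) : 0 < F z := by
  have := hP.decay z d 1 hz hzd.le fun y hy => hP.one_le_crossings y (hz.trans hy.1.le) hy.2
  rw [Nat.cast_one] at this
  linarith [hP.nonneg d]

lemma sublevelInf_zero (hP : IsFuelProfile F R d) (hd : 0 ≤ d) : sublevelInf F d 0 = d := by
  refine (sublevelInf_le 0).antisymm (not_lt.1 fun h => ?_)
  have := apply_sublevelInf_le hP.continuous h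
  exact this.not_gt (by exact_mod_cast hP.pos (sublevelInf_nonneg hP.continuous hd 0) h)

/-- The truncation `min (F ·) k` handles the case where `F` never drops to `k` before `d`. -/
lemma two_mul_sub_sublevelInf_le (hP : IsFuelProfile F R d) (hd : 0 ≤ d) (i : ℕ) :
    2 * (i + 1) * (sublevelInf F d i - sublevelInf F d (i + 1)) ≤
      min (F (sublevelInf F d (i + 1))) (i + 1) - min (F (sublevelInf F d i)) i := by
  set a := sublevelInf F d
  have hle : a (i + 1) ≤ a i := sublevelInf_antitone (Nat.le_succ i)
  rcases (show a (i + 1) ≤ d from sublevelInf_le _).lt_or_eq with hlt | heq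
  · have hFa : F (a (i + 1)) ≤ i + 1 := by exact_mod_cast apply_sublevelInf_le hP.continuous hlt
    have hdecay := hP.decay (a (i + 1)) (a i) (i + 1) (sublevelInf_nonneg hP.continuous hd _) hle
      fun z hz => by
        have hz₀ : 0 ≤ z := (sublevelInf_nonneg hP.continuous hd _).trans hz.1.le
        have : (i : ℝ) < R z :=
          (lt_apply_of_lt_sublevelInf hz₀ hz.2).trans_le (hP.le_crossings z hz₀)
        exact_mod_cast this
    rw [min_eq_left hFa]
    push_cast at hdecay
    linarith [min_le_left (F (a i)) i]
  · have hai : a i = d := (sublevelInf_le i).antisymm (heq.symm.trans_le hle)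
    rw [heq, hai, sub_self, mul_zero, sub_nonneg]
    exact min_le_min_left _ (by linarith)

theorem le_G (hP : IsFuelProfile F R d) {x : ℝ} (hx : 1 ≤ x) (hF₀ : F 0 ≤ x) : d ≤ G x := by
  wlog hd : 0 ≤ d
  · refine (not_le.1 hd).le.trans (this ⟨hP.continuous, hP.nonneg, hP.le_crossings,
      fun z hz hz' => absurd hz hz'.not_ge, hP.decay⟩ hx hF₀ le_rfl)
  obtain ⟨m, hm⟩ : ∃ m, ⌈x⌉₊ = m + 1 :=
    Nat.exists_eq_add_of_le' (Nat.one_le_ceil_iff.2 (by linarith))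
  set a := sublevelInf F d
  set b : ℕ → ℝ := fun i => min (F (a i)) i
  have ha₀ : a 0 = d := hP.sublevelInf_zero hd
  have ha : a (m + 1) = 0 := sublevelInf_eq_zero hP.continuous hd <| by
    exact_mod_cast hm ▸ hF₀.trans (Nat.le_ceil x)
  calc d = ∑ i ∈ Finset.range (m + 1), (a i - a (i + 1)) := by
        rw [Finset.sum_range_sub', ha₀, ha, sub_zero]
    _ ≤ ∑ i ∈ Finset.range (m + 1), (b (i + 1) - b i) / (2 * (i + 1)) :=
        Finset.sum_le_sum fun i _ => by
          rw [le_div_iff₀ (by positivity), mul_comm]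
          exact_mod_cast hP.two_mul_sub_sublevelInf_le hd i
    _ ≤ ∑ k ∈ Finset.Icc 1 m, 1 / (2 * (k : ℝ)) + (b (m + 1) - m) / (2 * (m + 1)) :=
        sum_range_sub_div_le b (by simp [b, hP.nonneg]) m fun k _ => min_le_right _ _
    _ ≤ G x := by
        have hb : b (m + 1) ≤ x := (min_le_left _ _).trans (ha ▸ hF₀)
        rw [G, hm, Nat.add_sub_cancel]
        push_cast
        gcongr
        linarith

end IsFuelProfile

noncomputable section

/- A drive from `p` to `q` is recorded as the segment `(p, q)`. -/

def lengthRight (y : ℝ) (s : ℝ × ℝ) : ℝ := max (max s.1 s.2 - max y (min s.1 s.2)) 0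

def consumedRight (y : ℝ) (l : List (ℝ × ℝ)) : ℝ := (l.map (lengthRight y)).sum

def pathLength (l : List (ℝ × ℝ)) : ℝ := (l.map fun s => |s.2 - s.1|).sum

def upCrossings (y : ℝ) (l : List (ℝ × ℝ)) : ℕ := l.countP fun s => s.1 ≤ y ∧ y < s.2

def downCrossings (y : ℝ) (l : List (ℝ × ℝ)) : ℕ := l.countP fun s => s.2 ≤ y ∧ y < s.1

end

section Segment

variable (s : ℝ × ℝ)

lemma lengthRight_nonneg (y : ℝ) : 0 ≤ lengthRight y s := le_max_right _ _

lemma lengthRight_le_abs (y : ℝ) : lengthRight y s ≤ |s.2 - s.1| := by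
  refine max_le ?_ (abs_nonneg _)
  linarith [max_sub_min_eq_abs s.1 s.2, le_max_right y (min s.1 s.2)]

lemma lengthRight_antitone : Antitone fun y => lengthRight y s := fun _ _ h =>
  max_le_max_right _ (sub_le_sub_left (max_le_max_right _ h) _)

lemma continuous_lengthRight : Continuous fun y => lengthRight y s :=
  (continuous_const.sub (continuous_id.max continuous_const)).max continuous_const

lemma volume_Ico_inter_Ioo_le {α β : ℝ} (h : α ≤ β) :
    volume (Ico (min s.1 s.2) (max s.1 s.2) ∩ Ioo α β) ≤
      ENNReal.ofReal (lengthRight α s - lengthRight β s) := by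
  refine (measure_mono (inter_subset_inter_right _ Ioo_subset_Ico_self)).trans ?_
  rw [Ico_inter_Ico, Real.volume_Ico]
  refine ENNReal.ofReal_le_ofReal ?_
  simp only [lengthRight, max_def, min_def]
  split_ifs <;> linarith

end Segment

section Path

variable {α β y : ℝ} (l l' : List (ℝ × ℝ))

@[simp] lemma consumedRight_nil : consumedRight y [] = 0 := rfl
@[simp] lemma upCrossings_nil : upCrossings y [] = 0 := rfl
@[simp] lemma pathLength_nil : pathLength [] = 0 := rfl

@[simp] lemma consumedRight_append :
    consumedRight y (l ++ l') = consumedRight y l + consumedRight y l' := by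
  simp [consumedRight]

@[simp] lemma upCrossings_append : upCrossings y (l ++ l') = upCrossings y l + upCrossings y l' :=
  List.countP_append ..

@[simp] lemma downCrossings_append :
    downCrossings y (l ++ l') = downCrossings y l + downCrossings y l' :=
  List.countP_append ..

@[simp] lemma pathLength_append : pathLength (l ++ l') = pathLength l + pathLength l' := by
  simp [pathLength]

lemma consumedRight_nonneg : 0 ≤ consumedRight y l :=
  List.sum_nonneg fun _ ha => by
    obtain ⟨s, -, rfl⟩ := List.mem_map.1 ha
    exact lengthRight_nonneg s y

lemma consumedRight_le_pathLength : consumedRight y l ≤ pathLength l :=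
  List.sum_le_sum fun s _ => lengthRight_le_abs s y

lemma continuous_consumedRight : Continuous fun y => consumedRight y l :=
  continuous_list_sum l fun s _ => continuous_lengthRight s

lemma upCrossings_add_downCrossings : upCrossings y l + downCrossings y l =
    l.countP fun s => y ∈ Ico (min s.1 s.2) (max s.1 s.2) := by
  induction l with
  | nil => rfl
  | cons s l ih =>
    simp only [upCrossings, downCrossings, List.countP_cons, decide_eq_true_eq] at ih ⊢
    have hs : ((if s.1 ≤ y ∧ y < s.2 then 1 else 0) + if s.2 ≤ y ∧ y < s.1 then 1 else 0) =
        if y ∈ Ico (min s.1 s.2) (max s.1 s.2) then 1 else 0 := by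
      simp only [mem_Ico, min_le_iff, lt_max_iff]
      grind
    omega

lemma sum_volume_le_ofReal_consumedRight_sub (h : α ≤ β) :
    (l.map fun s => volume (Ico (min s.1 s.2) (max s.1 s.2) ∩ Ioo α β)).sum ≤
      ENNReal.ofReal (consumedRight α l - consumedRight β l) := by
  induction l with
  | nil => simp
  | cons s l ih =>
    have hs := sub_nonneg.2 (lengthRight_antitone s h)
    have hl := sub_nonneg.2 (List.sum_le_sum fun s' (_ : s' ∈ l) => lengthRight_antitone s' h)
    simp only [List.map_cons, List.sum_cons, consumedRight] at ih hl ⊢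
    rw [add_sub_add_comm, ENNReal.ofReal_add hs hl]
    exact add_le_add (volume_Ico_inter_Ioo_le s h) ih

lemma natCast_mul_sub_le_consumedRight_sub {m : ℕ} (h : α ≤ β)
    (hm : ∀ z ∈ Ioo α β, m ≤ upCrossings z l + downCrossings z l) :
    m * (β - α) ≤ consumedRight α l - consumedRight β l := by
  have := (natCast_mul_le_sum_measure_inter volume (fun s => measurableSet_Ico) l
    measurableSet_Ioo fun z hz => upCrossings_add_downCrossings (y := z) l ▸ hm z hz).trans
    (sum_volume_le_ofReal_consumedRight_sub l h)
  rw [Real.volume_Ioo, ← ENNReal.ofReal_natCast, ← ENNReal.ofReal_mul (Nat.cast_nonneg m)] at this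
  exact (ENNReal.ofReal_le_ofReal_iff
    (sub_nonneg.2 (List.sum_le_sum fun s _ => lengthRight_antitone s h))).1 this

end Path

noncomputable def fuelRight (y : ℝ) (s : JeepState) : ℝ :=
  (if y < s.pos then s.tank else 0) + s.depot.sum fun q a => if y < q then a else 0

noncomputable def totalFuel (s : JeepState) : ℝ := s.tank + s.depot.sum fun _ a => a

structure IsValid (s : JeepState) : Prop where
  tank_nonneg : 0 ≤ s.tank
  tank_le_one : s.tank ≤ 1
  depot_nonneg : ∀ q, 0 ≤ s.depot q

lemma isValid_jeepInit {x : ℝ} (hx : 0 ≤ x) : IsValid (jeepInit x) :=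
  ⟨le_rfl, zero_le_one, fun q => by
    simpa only [jeepInit, Finsupp.single_apply] using ite_nonneg hx le_rfl⟩

@[simp] lemma totalFuel_jeepInit (x : ℝ) : totalFuel (jeepInit x) = x := by
  simp [totalFuel, jeepInit]

lemma fuelRight_jeepInit (x : ℝ) {y : ℝ} (hy : 0 ≤ y) : fuelRight y (jeepInit x) = 0 := by
  simp [fuelRight, jeepInit, not_lt.2 hy]

namespace IsValid

variable {s s' : JeepState}

lemma totalFuel_nonneg (hs : IsValid s) : 0 ≤ totalFuel s :=
  add_nonneg hs.tank_nonneg (Finset.sum_nonneg fun q _ => hs.depot_nonneg q)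

lemma fuelRight_nonneg (hs : IsValid s) (y : ℝ) : 0 ≤ fuelRight y s :=
  add_nonneg (ite_nonneg hs.tank_nonneg le_rfl)
    (Finset.sum_nonneg fun q _ => ite_nonneg (hs.depot_nonneg q) le_rfl)

lemma of_step (hs : IsValid s) (h : JeepStep s s') : IsValid s' := by
  cases h with
  | drive p' hp' =>
    exact ⟨hp', by linarith [hs.tank_le_one, abs_nonneg (p' - s.pos)], hs.depot_nonneg⟩
  | transfer t' D' _ ht₀ ht₁ hD => exact ⟨ht₀, ht₁, hD⟩

end IsValid

/-- `l` records the drives of a run from `s` to `s'`. -/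
structure IsTrace (s s' : JeepState) (l : List (ℝ × ℝ)) : Prop where
  netCrossings : ∀ y, (upCrossings y l : ℤ) - downCrossings y l =
    (if y < s'.pos then 1 else 0) - (if y < s.pos then 1 else 0)
  totalFuel_add : totalFuel s' + pathLength l = totalFuel s
  /-- Fuel passes `y` only in the tank: at most one tankload per outward crossing. -/
  fuelRight_add_le : ∀ y, fuelRight y s' + consumedRight y l ≤ fuelRight y s + upCrossings y l

namespace IsTrace

variable {s s' s'' : JeepState} {l l' : List (ℝ × ℝ)}

lemma nil (s : JeepState) : IsTrace s s [] :=
  ⟨fun _ => by simp [upCrossings, downCrossings], by simp, fun _ => by simp⟩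

lemma append (h : IsTrace s s' l) (h' : IsTrace s' s'' l') : IsTrace s s'' (l ++ l') where
  netCrossings y := by
    have := h.netCrossings y
    have := h'.netCrossings y
    push_cast [upCrossings_append, downCrossings_append]
    linarith
  totalFuel_add := by
    have := h.totalFuel_add
    have := h'.totalFuel_add
    simp only [pathLength_append]
    linarith
  fuelRight_add_le y := by
    have := h.fuelRight_add_le y
    have := h'.fuelRight_add_le y
    push_cast [consumedRight_append, upCrossings_append]
    linarith

lemma one_le_upCrossings {y : ℝ} (h : IsTrace s s' l) (hy : s.pos ≤ y) (hy' : y < s'.pos) :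
    1 ≤ upCrossings y l := by
  have := h.netCrossings y
  rw [if_pos hy', if_neg (not_lt.2 hy)] at this
  omega

lemma upCrossings_eq_downCrossings (h : IsTrace s s' l) (hpos : s'.pos = s.pos) (y : ℝ) :
    upCrossings y l = downCrossings y l := by
  have := h.netCrossings y
  rw [hpos, sub_self, sub_eq_zero] at this
  exact_mod_cast this

lemma consumedRight_le (h : IsTrace s s' l) (hs' : IsValid s') (y : ℝ) :
    consumedRight y l ≤ fuelRight y s + upCrossings y l := by
  linarith [h.fuelRight_add_le y, hs'.fuelRight_nonneg y]

lemma consumedRight_le_totalFuel (h : IsTrace s s' l) (hs' : IsValid s') (y : ℝ) :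
    consumedRight y l ≤ totalFuel s := by
  linarith [h.totalFuel_add, hs'.totalFuel_nonneg, consumedRight_le_pathLength l (y := y)]

end IsTrace

lemma drive_fuelRight_le {p q t y : ℝ} (ht : t ≤ 1) (hpq : |q - p| ≤ t) :
    (if y < q then t - |q - p| else 0) + lengthRight y (p, q) ≤
      (if y < p then t else 0) + if p ≤ y ∧ y < q then 1 else 0 := by
  simp only [lengthRight, max_def, min_def, abs_eq_max_neg] at hpq ⊢
  grind

lemma exists_isTrace_of_step {s s' : JeepState} (h : JeepStep s s') (ht : s.tank ≤ 1) :
    ∃ l, IsTrace s s' l := by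
  cases h with
  | drive p' hp' =>
    refine ⟨[(s.pos, p')], fun y => ?_, ?_, fun y => ?_⟩
    · simp only [upCrossings, downCrossings, List.countP_singleton]
      grind
    · simp only [totalFuel, pathLength, List.map_singleton, List.sum_singleton]
      ring
    · have := drive_fuelRight_le (y := y) ht (sub_nonneg.1 hp')
      simp only [fuelRight, consumedRight, upCrossings, List.map_singleton, List.sum_singleton,
        List.countP_singleton, decide_eq_true_eq]
      push_cast
      linarith
  | transfer t' D' hcons ht₀ ht₁ hD hoff =>
    refine ⟨[], fun y => by simp [upCrossings, downCrossings], ?_, fun y => ?_⟩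
    · have := Finsupp.sum_add_eq_of_forall_ne hoff (fun _ a => a) (fun _ => rfl) fun _ _ _ => rfl
      simp only [totalFuel, pathLength_nil]
      linarith
    · have := Finsupp.sum_add_eq_of_forall_ne hoff (fun q a => if y < q then a else 0)
        (fun _ => ite_self 0) fun _ _ _ => by split_ifs <;> simp
      simp only [fuelRight, consumedRight_nil, upCrossings_nil] at this ⊢
      split_ifs at this ⊢ <;> push_cast <;> linarith

lemma exists_isTrace_of_reflTransGen {s s' : JeepState}
    (h : Relation.ReflTransGen JeepStep s s') (hs : IsValid s) :
    IsValid s' ∧ ∃ l, IsTrace s s' l := by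
  induction h with
  | refl => exact ⟨hs, [], IsTrace.nil s⟩
  | tail _ hstep ih =>
    obtain ⟨hv, l, hl⟩ := ih
    obtain ⟨l', hl'⟩ := exists_isTrace_of_step hstep hv.tank_le_one
    exact ⟨hv.of_step hstep, l ++ l', hl.append hl'⟩

lemma isFuelProfile_of_roundTrip {x : ℝ} {s s' : JeepState} {l₁ l₂ : List (ℝ × ℝ)}
    (t₁ : IsTrace (jeepInit x) s l₁) (t₂ : IsTrace s s' l₂) (hs' : IsValid s')
    (hs'₀ : s'.pos = 0) :
    IsFuelProfile (consumedRight · (l₁ ++ l₂)) (upCrossings · (l₁ ++ l₂)) s.pos where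
  continuous := continuous_consumedRight _
  nonneg _ := consumedRight_nonneg _
  le_crossings z hz := by
    simpa [fuelRight_jeepInit x hz] using (t₁.append t₂).consumedRight_le hs' z
  one_le_crossings z hz hzs := (t₁.one_le_upCrossings hz hzs).trans (by simp)
  decay α β k _ hαβ hk := by
    have := natCast_mul_sub_le_consumedRight_sub (m := 2 * k) _ hαβ fun z hz => by
      have := hk z hz
      rw [← (t₁.append t₂).upCrossings_eq_downCrossings hs'₀ z]
      omega
    push_cast at this
    linarith

end Jeep

/-- For every `x ≥ 1` and every plan with `x` tankloads, if the plan reaches a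
state with jeep position `d` and subsequently a state with jeep position `0`,
then `d ≤ G x`: a round trip cannot go farther than `G x`. -/
theorem jeep_roundtrip_bound (x : ℝ) (hx : 1 ≤ x) (d : ℝ)
    (s₁ s₂ : JeepState)
    (h₁ : Relation.ReflTransGen JeepStep (jeepInit x) s₁)
    (h₂ : Relation.ReflTransGen JeepStep s₁ s₂)
    (hd : s₁.pos = d) (h0 : s₂.pos = 0) :
    d ≤ G x := by
  obtain ⟨hv₁, l₁, t₁⟩ :=
    Jeep.exists_isTrace_of_reflTransGen h₁ (Jeep.isValid_jeepInit (by linarith))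
  obtain ⟨hv₂, l₂, t₂⟩ := Jeep.exists_isTrace_of_reflTransGen h₂ hv₁
  subst hd
  exact (Jeep.isFuelProfile_of_roundTrip t₁ t₂ hv₂ h0).le_G hx
    (by simpa using (t₁.append t₂).consumedRight_le_totalFuel hv₂ 0)
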